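/- Let d ≥ 2, μ > −1/2, β > −1. For each m, let {P_k^m : k ∈ ℕ_0^d, |k| = m} be an orthonormal basis of the space of orthogonal polynomials of degree m on the unit ball B^d with respect to the weight ϖ_μ(x) = (1−‖x‖²)^{μ−1/2}. Define Q_{m,k}^n(x,t) := C_{n−m}^{(β+1/2, m+μ+(d−1)/2)}(t) · t^m · P_k^m(x/t) for |k| = m ≤ n. Then these are polynomials of degree at most n that are mutually orthogonal on the double cone {(x,t) ∈ ℝ^d × ℝ : ‖x‖ ≤ |t|, −1 ≤ t ≤ 1} with respect to the weight W(x,t) = (1−t²)^β (t² − ‖x‖²)^{μ−1/2}: for (n,m,k) ≠ (n',m',k'), ∫_{−1}^1 ∫_{‖x‖ ≤ |t|} Q_{m,k}^n(x,t) Q_{m',k'}^{n'}(x,t) (1−t²)^β (t²−‖x‖²)^{μ−1/2} dx dt = 0, while the integral is strictly positive when (n,m,k) = (n',m',k'). -/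

import Mathlib

open MeasureTheory MvPolynomial Real

noncomputable section

/-- `p` is a generalized Gegenbauer polynomial `C_n^{(μ,ν)}`: it has degree `n` and is
orthogonal to all lower degrees with respect to `|t|^{2ν} (1−t²)^{μ−1/2}` on `(−1,1)`. -/
def IsGenGegenbauer (μ ν : ℝ) (n : ℕ) (p : Polynomial ℝ) : Prop :=
  p.degree = n ∧ ∀ k < n,
    ∫ t in Set.Ioo (-1 : ℝ) 1,
      p.eval t * t ^ k * |t| ^ (2 * ν) * (1 - t ^ 2) ^ (μ - 1 / 2) = 0

/-- The functions `Q_{m,k}^n(x,t) = C_{n−m}^{(β+1/2, m+μ+(d−1)/2)}(t) t^m P_k^m(x/t)`. -/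
def doubleConeFun (d : ℕ) (C : ℕ → ℝ → ℝ → Polynomial ℝ)
    (Pb : ℕ → (Fin d → ℕ) → MvPolynomial (Fin d) ℝ) (μ β : ℝ) (n m : ℕ)
    (k : Fin d → ℕ) (x : EuclideanSpace ℝ (Fin d)) (t : ℝ) : ℝ :=
  (C (n - m) (β + 1 / 2) (m + μ + (d - 1) / 2)).eval t * t ^ m *
    MvPolynomial.eval (t⁻¹ • x) (Pb m k)

/- ### Auxiliary lemmas -/

lemma weight_integrable {b : ℝ} (hb : -1 < b) :
    IntegrableOn (fun t : ℝ => (1 - t ^ 2) ^ b) (Set.Ioo (-1) 1) := by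
  set K : ℝ := max 1 ((2:ℝ) ^ b) with hK
  have hfactor : ∀ s : ℝ, 1 ≤ s → s ≤ 2 → s ^ b ≤ K := by
    intro s h1 h2
    rcases le_or_gt 0 b with hb0 | hb0
    · exact le_max_of_le_right (Real.rpow_le_rpow (by linarith) h2 hb0)
    · exact le_max_of_le_left (Real.rpow_le_one_of_one_le_of_nonpos h1 hb0.le)
  have hmeas : ∀ s : Set ℝ, MeasurableSet s → s ⊆ Set.Ioo (-1) 1 →
      AEStronglyMeasurable (fun t : ℝ => (1 - t ^ 2) ^ b) (volume.restrict s) := by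
    intro s hs hsub
    refine (ContinuousOn.aestronglyMeasurable ?_ hs)
    refine ContinuousOn.rpow_const ?_ ?_
    · exact (continuous_const.sub (continuous_pow 2)).continuousOn
    · intro t ht
      have h := hsub ht
      left; nlinarith [h.1, h.2]
  have h1 : IntegrableOn (fun t : ℝ => (1 - t ^ 2) ^ b) (Set.Ioo 0 1) := by
    have base : IntervalIntegrable (fun x : ℝ => x ^ b) volume 0 1 :=
      intervalIntegral.intervalIntegrable_rpow' hb
    have comp := base.comp_sub_left 1
    simp only [sub_zero, sub_self] at comp
    have hint : IntegrableOn (fun t : ℝ => (1 - t) ^ b) (Set.Ioo 0 1) := by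
      rw [← intervalIntegrable_iff_integrableOn_Ioo_of_le (by norm_num)]
      exact comp.symm
    refine Integrable.mono' (hint.const_mul K) (hmeas _ measurableSet_Ioo (by
      intro t ht; exact ⟨by linarith [ht.1], ht.2⟩)) ?_
    filter_upwards [ae_restrict_mem measurableSet_Ioo] with t ht
    have h1t : (0:ℝ) < 1 - t := by linarith [ht.2]
    have h2t : (0:ℝ) ≤ 1 + t := by linarith [ht.1]
    have : (1 - t ^ 2 : ℝ) = (1 + t) * (1 - t) := by ring
    rw [Real.norm_eq_abs, abs_of_nonneg (Real.rpow_nonneg (by nlinarith) _), this,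
      Real.mul_rpow h2t h1t.le]
    calc (1 + t) ^ b * (1 - t) ^ b ≤ K * (1 - t) ^ b := by
          apply mul_le_mul_of_nonneg_right _ (Real.rpow_nonneg h1t.le _)
          exact hfactor _ (by linarith [ht.1]) (by linarith [ht.2])
      _ = K * (1 - t) ^ b := rfl
  have h2 : IntegrableOn (fun t : ℝ => (1 - t ^ 2) ^ b) (Set.Ioc (-1) 0) := by
    have base : IntervalIntegrable (fun x : ℝ => x ^ b) volume 0 1 :=
      intervalIntegral.intervalIntegrable_rpow' hb
    have comp := base.comp_add_right 1
    norm_num at comp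
    have hint : IntegrableOn (fun t : ℝ => (t + 1) ^ b) (Set.Ioc (-1) 0) := by
      rw [← intervalIntegrable_iff_integrableOn_Ioc_of_le (by norm_num)]
      exact comp
    refine Integrable.mono' (hint.const_mul K) (hmeas _ measurableSet_Ioc (by
      intro t ht; exact ⟨ht.1, by linarith [ht.2]⟩)) ?_
    filter_upwards [ae_restrict_mem measurableSet_Ioc] with t ht
    have h1t : (0:ℝ) < 1 + t := by linarith [ht.1]
    have h2t : (0:ℝ) ≤ 1 - t := by linarith [ht.2]
    have heq : (1 - t ^ 2 : ℝ) = (1 - t) * (1 + t) := by ring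
    rw [Real.norm_eq_abs, abs_of_nonneg (Real.rpow_nonneg (by nlinarith) _), heq,
      Real.mul_rpow h2t h1t.le]
    have h3 : (1 + t) ^ b = (t + 1) ^ b := by rw [add_comm]
    rw [h3]
    apply mul_le_mul_of_nonneg_right _ (Real.rpow_nonneg (by linarith) _)
    exact hfactor _ (by linarith [ht.2]) (by linarith [ht.1])
  have : Set.Ioo (-1:ℝ) 1 = Set.Ioc (-1) 0 ∪ Set.Ioo 0 1 :=
    (Set.Ioc_union_Ioo_eq_Ioo (by norm_num) (by norm_num)).symm
  rw [this]
  exact h2.union h1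

lemma poly_weight_integrable (p : Polynomial ℝ) (j : ℕ) {e b : ℝ} (he : 0 ≤ e) (hb : -1 < b) :
    IntegrableOn (fun t : ℝ => p.eval t * t ^ j * |t| ^ e * (1 - t ^ 2) ^ b)
      (Set.Ioo (-1) 1) := by
  have hcont : Continuous fun t : ℝ => p.eval t * t ^ j :=
    (p.continuous).mul (continuous_pow j)
  obtain ⟨M, hM⟩ := (isCompact_Icc (a := (-1:ℝ)) (b := 1)).exists_bound_of_continuousOn
    hcont.continuousOn
  refine Integrable.mono' ((weight_integrable hb).const_mul M) ?_ ?_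
  · refine AEStronglyMeasurable.mul ?_ ?_
    · exact (hcont.mul (continuous_abs.rpow_const
        (fun x => Or.inr he))).aestronglyMeasurable
    · exact (ContinuousOn.aestronglyMeasurable (ContinuousOn.rpow_const
        (continuous_const.sub (continuous_pow 2)).continuousOn
        (fun t ht => Or.inl (by nlinarith [ht.1, ht.2]))) measurableSet_Ioo)
  · filter_upwards [ae_restrict_mem measurableSet_Ioo] with t ht
    have h1 : (0:ℝ) < 1 - t ^ 2 := by nlinarith [ht.1, ht.2]
    have habs : |t| ≤ 1 := abs_le.mpr ⟨ht.1.le, ht.2.le⟩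
    have h2 : |t| ^ e ≤ 1 := Real.rpow_le_one (abs_nonneg t) habs he
    rw [Real.norm_eq_abs, abs_mul, abs_mul,
      abs_of_nonneg (Real.rpow_nonneg (abs_nonneg t) e),
      abs_of_nonneg (Real.rpow_nonneg h1.le b)]
    have hMt : |p.eval t * t ^ j| ≤ M := by
      have := hM t ⟨ht.1.le, ht.2.le⟩
      rwa [Real.norm_eq_abs] at this
    calc |p.eval t * t ^ j| * |t| ^ e * (1 - t ^ 2) ^ b
        ≤ M * 1 * (1 - t ^ 2) ^ b := by
          apply mul_le_mul_of_nonneg_right _ (Real.rpow_nonneg h1.le b)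
          exact mul_le_mul hMt h2 (Real.rpow_nonneg (abs_nonneg t) e)
            ((abs_nonneg _).trans hMt)
      _ = M * (1 - t ^ 2) ^ b := by ring

lemma geg_orth (p q : Polynomial ℝ) {μ' ν' : ℝ} (hμ : (-1:ℝ) < μ' - 1/2) (hν : 0 ≤ 2 * ν')
    (N : ℕ) (hq : q.natDegree < N)
    (hp : ∀ k < N, ∫ t in Set.Ioo (-1:ℝ) 1,
      p.eval t * t ^ k * |t| ^ (2 * ν') * (1 - t ^ 2) ^ (μ' - 1/2) = 0) :
    ∫ t in Set.Ioo (-1:ℝ) 1,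
      p.eval t * q.eval t * |t| ^ (2 * ν') * (1 - t ^ 2) ^ (μ' - 1/2) = 0 := by
  have key : ∀ t : ℝ, p.eval t * q.eval t * |t| ^ (2 * ν') * (1 - t ^ 2) ^ (μ' - 1/2)
      = ∑ j ∈ Finset.range (q.natDegree + 1),
          q.coeff j * (p.eval t * t ^ j * |t| ^ (2 * ν') * (1 - t ^ 2) ^ (μ' - 1/2)) := by
    intro t
    rw [Polynomial.eval_eq_sum_range (p := q), Finset.mul_sum, Finset.sum_mul, Finset.sum_mul]
    exact Finset.sum_congr rfl fun j _ => by ring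
  simp only [key]
  rw [integral_finset_sum]
  · exact Finset.sum_eq_zero fun j hj => by
      rw [integral_const_mul, hp j (lt_of_le_of_lt (Nat.lt_succ_iff.mp
        (Finset.mem_range.mp hj)) hq), mul_zero]
  · exact fun j _ => (poly_weight_integrable p j hν hμ).const_mul _

lemma geg_orth_sym {μ' ν' : ℝ} (hμ : (-1:ℝ) < μ' - 1/2) (hν : 0 ≤ 2 * ν')
    {N N' : ℕ} (hNN : N ≠ N') {p q : Polynomial ℝ}
    (hp : IsGenGegenbauer μ' ν' N p) (hq : IsGenGegenbauer μ' ν' N' q) :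
    ∫ t in Set.Ioo (-1:ℝ) 1,
      p.eval t * q.eval t * |t| ^ (2 * ν') * (1 - t ^ 2) ^ (μ' - 1/2) = 0 := by
  have hdp : p.natDegree = N := Polynomial.natDegree_eq_of_degree_eq_some hp.1
  have hdq : q.natDegree = N' := Polynomial.natDegree_eq_of_degree_eq_some hq.1
  rcases lt_or_gt_of_ne hNN with h | h
  · -- N < N' : expand p against q's orthogonality
    have hcomm : ∀ t : ℝ, p.eval t * q.eval t = q.eval t * p.eval t :=
      fun t => mul_comm _ _
    simp only [hcomm]
    exact geg_orth q p hμ hν N' (by omega) (fun j hj => by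
      have := hq.2 j hj
      simpa using this)
  · exact geg_orth p q hμ hν N (by omega) (fun j hj => by
      have := hp.2 j hj
      simpa using this)

lemma scale_ball_integral (d : ℕ) {t : ℝ} (ht : t ≠ 0)
    (g : EuclideanSpace ℝ (Fin d) → ℝ) :
    ∫ x in Metric.closedBall (0 : EuclideanSpace ℝ (Fin d)) |t|, g x
      = |t| ^ d * ∫ u in Metric.closedBall (0 : EuclideanSpace ℝ (Fin d)) 1, g (t • u) := by
  have htpos : 0 < |t| := abs_pos.mpr ht
  set f := (Metric.closedBall (0 : EuclideanSpace ℝ (Fin d)) |t|).indicator g with hf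
  have hmem : ∀ u : EuclideanSpace ℝ (Fin d),
      t • u ∈ Metric.closedBall (0 : EuclideanSpace ℝ (Fin d)) |t| ↔
      u ∈ Metric.closedBall (0 : EuclideanSpace ℝ (Fin d)) 1 := by
    intro u
    simp only [Metric.mem_closedBall, dist_zero_right, norm_smul, Real.norm_eq_abs]
    constructor
    · intro h; nlinarith [abs_nonneg t, norm_nonneg u]
    · intro h; nlinarith [abs_nonneg t, norm_nonneg u]
  have hind : ∀ u, f (t • u) =
      (Metric.closedBall (0 : EuclideanSpace ℝ (Fin d)) 1).indicator (fun u => g (t • u)) u := by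
    intro u
    by_cases h : u ∈ Metric.closedBall (0 : EuclideanSpace ℝ (Fin d)) 1
    · rw [Set.indicator_of_mem h, hf, Set.indicator_of_mem ((hmem u).mpr h)]
    · rw [Set.indicator_of_notMem h, hf,
        Set.indicator_of_notMem (fun hc => h ((hmem u).mp hc))]
  have hcomp := MeasureTheory.Measure.integral_comp_smul (volume
    (α := EuclideanSpace ℝ (Fin d))) f t
  rw [finrank_euclideanSpace_fin] at hcomp
  have h1 : ∫ x in Metric.closedBall (0 : EuclideanSpace ℝ (Fin d)) |t|, g x = ∫ x, f x :=
    (integral_indicator measurableSet_closedBall).symm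
  have h2 : ∫ u in Metric.closedBall (0 : EuclideanSpace ℝ (Fin d)) 1, g (t • u)
      = ∫ u, f (t • u) := by
    rw [← integral_indicator measurableSet_closedBall]
    exact integral_congr_ae (Filter.Eventually.of_forall fun u => (hind u).symm)
  rw [h1, h2, hcomp, smul_eq_mul, abs_inv, abs_pow, ← mul_assoc,
    mul_inv_cancel₀ (by positivity), one_mul]

lemma inner_transform (d : ℕ) {t : ℝ} (ht : t ≠ 0) (μ : ℝ)
    (P P' : MvPolynomial (Fin d) ℝ) (c c' : ℝ) (m m' : ℕ) :
    ∫ x in Metric.closedBall (0 : EuclideanSpace ℝ (Fin d)) |t|,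
      (c * t ^ m * MvPolynomial.eval (t⁻¹ • x) P) *
      (c' * t ^ m' * MvPolynomial.eval (t⁻¹ • x) P') * (t ^ 2 - ‖x‖ ^ 2) ^ (μ - 1/2)
    = c * c' * t ^ (m + m') * |t| ^ d * (t ^ 2) ^ (μ - 1/2) *
        ∫ u in Metric.closedBall (0 : EuclideanSpace ℝ (Fin d)) 1,
          MvPolynomial.eval u P * MvPolynomial.eval u P' * (1 - ‖u‖ ^ 2) ^ (μ - 1/2) := by
  rw [scale_ball_integral d ht]
  have key : Set.EqOn
      (fun u : EuclideanSpace ℝ (Fin d) =>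
        (c * t ^ m * MvPolynomial.eval (t⁻¹ • (t • u)) P) *
        (c' * t ^ m' * MvPolynomial.eval (t⁻¹ • (t • u)) P') *
        (t ^ 2 - ‖t • u‖ ^ 2) ^ (μ - 1/2))
      (fun u : EuclideanSpace ℝ (Fin d) =>
        (c * c' * t ^ (m + m') * (t ^ 2) ^ (μ - 1/2)) *
        (MvPolynomial.eval u P * MvPolynomial.eval u P' * (1 - ‖u‖ ^ 2) ^ (μ - 1/2)))
      (Metric.closedBall 0 1) := by
    intro u hu
    simp only [Metric.mem_closedBall, dist_zero_right] at hu
    have h1 : t⁻¹ • (t • u) = u := inv_smul_smul₀ ht u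
    have h2 : ‖t • u‖ ^ 2 = t ^ 2 * ‖u‖ ^ 2 := by
      rw [norm_smul, Real.norm_eq_abs, mul_pow, sq_abs]
    have h3 : t ^ 2 - ‖t • u‖ ^ 2 = t ^ 2 * (1 - ‖u‖ ^ 2) := by rw [h2]; ring
    have h4 : (0:ℝ) ≤ 1 - ‖u‖ ^ 2 := by nlinarith [norm_nonneg u]
    simp only [h1, h3, Real.mul_rpow (sq_nonneg t) h4]
    ring
  rw [setIntegral_congr_fun measurableSet_closedBall key, integral_const_mul]
  ring

lemma pow_abs_rpow (m d : ℕ) (μ : ℝ) {t : ℝ} (ht : t ≠ 0) :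
    t ^ (m + m) * |t| ^ d * (t ^ 2) ^ (μ - 1/2)
      = |t| ^ (2 * ((m:ℝ) + μ + ((d:ℝ) - 1)/2)) := by
  have h1 : 0 < |t| := abs_pos.2 ht
  have e1 : t ^ (m + m) = |t| ^ (m + m) := (Even.pow_abs ⟨m, rfl⟩ t).symm
  have e2 : (t ^ 2 : ℝ) = |t| ^ (2:ℕ) := (Even.pow_abs ⟨1, rfl⟩ t).symm
  rw [e1, e2, ← pow_add, ← Real.rpow_natCast |t| (m + m + d),
    ← Real.rpow_natCast |t| 2, ← Real.rpow_mul (abs_nonneg t),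
    ← Real.rpow_add h1]
  congr 1
  push_cast
  ring

noncomputable def homog (d m : ℕ) (P : MvPolynomial (Fin d) ℝ) :
    MvPolynomial (Fin (d+1)) ℝ :=
  ∑ α ∈ P.support, monomial
    (Finsupp.equivFunOnFinite.symm (Fin.snoc (⇑α) (m - ∑ i, α i))) (P.coeff α)

lemma snoc_finsupp_sum (d : ℕ) (α : Fin d →₀ ℕ) (s : ℕ) :
    ((Finsupp.equivFunOnFinite.symm (Fin.snoc (⇑α) s : Fin (d+1) → ℕ)).sum fun _ e => e)
      = (∑ i, α i) + s := by
  rw [Finsupp.sum_fintype _ _ (fun _ => rfl)]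
  simp only [Finsupp.coe_equivFunOnFinite_symm]
  rw [Fin.sum_univ_castSucc]
  simp [Fin.snoc_castSucc, Fin.snoc_last]

lemma homog_totalDegree (d m : ℕ) (P : MvPolynomial (Fin d) ℝ)
    (h : P.totalDegree ≤ m) : (homog d m P).totalDegree ≤ m := by
  refine le_trans (totalDegree_finset_sum _ _) (Finset.sup_le fun α hα => ?_)
  refine le_trans (totalDegree_monomial_le _ _) ?_
  have hs := snoc_finsupp_sum d α (m - ∑ i, α i)
  simp only [Function.id_def]
  rw [hs]
  have hle : (∑ i, α i) ≤ m := by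
    refine le_trans ?_ h
    have := le_totalDegree (p := P) (s := α) hα
    rwa [Finsupp.sum_fintype _ _ (fun _ => rfl)] at this
  omega

lemma homog_eval (d m : ℕ) (P : MvPolynomial (Fin d) ℝ) (h : P.totalDegree ≤ m)
    {t : ℝ} (ht : t ≠ 0) (x : Fin d → ℝ) :
    MvPolynomial.eval (Fin.snoc x t) (homog d m P)
      = t ^ m * MvPolynomial.eval (t⁻¹ • x) P := by
  rw [homog, map_sum, eval_eq' (t⁻¹ • x) P, Finset.mul_sum]
  refine Finset.sum_congr rfl fun α hα => ?_
  have hle : (∑ i, α i) ≤ m := by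
    refine le_trans ?_ h
    have := le_totalDegree (p := P) (s := α) hα
    rwa [Finsupp.sum_fintype _ _ (fun _ => rfl)] at this
  rw [eval_monomial, Finsupp.prod_pow]
  simp only [Finsupp.coe_equivFunOnFinite_symm]
  rw [Fin.prod_univ_castSucc]
  simp only [Fin.snoc_castSucc, Fin.snoc_last]
  have hprod : ∏ i : Fin d, (t⁻¹ • x) i ^ α i
      = (t⁻¹) ^ (∑ i, α i) * ∏ i : Fin d, x i ^ α i := by
    rw [← Finset.prod_pow_eq_pow_sum, ← Finset.prod_mul_distrib]
    refine Finset.prod_congr rfl fun i _ => ?_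
    rw [Pi.smul_apply, smul_eq_mul, mul_pow]
  rw [hprod]
  have hts : t ^ (m - (∑ i, α i)) = t ^ m * (t⁻¹) ^ (∑ i, α i) := by
    rw [inv_pow, pow_sub₀ t ht hle]
  rw [hts]
  ring

lemma evalTwo_totalDegree (d : ℕ) (c : Polynomial ℝ) :
    (Polynomial.eval₂ MvPolynomial.C (X (Fin.last d)) c).totalDegree ≤ c.natDegree := by
  rw [Polynomial.eval₂_eq_sum_range]
  refine le_trans (totalDegree_finset_sum _ _) (Finset.sup_le fun i hi => ?_)
  refine le_trans (totalDegree_mul _ _) ?_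
  rw [totalDegree_C, totalDegree_X_pow, zero_add]
  exact Nat.lt_succ_iff.mp (Finset.mem_range.mp hi)

lemma evalTwo_eval (d : ℕ) (c : Polynomial ℝ) (v : Fin (d+1) → ℝ) :
    MvPolynomial.eval v (Polynomial.eval₂ MvPolynomial.C (X (Fin.last d)) c)
      = c.eval (v (Fin.last d)) := by
  rw [Polynomial.hom_eval₂]
  simp only [eval_X]
  have h : (MvPolynomial.eval v).comp (MvPolynomial.C : ℝ →+* MvPolynomial (Fin (d+1)) ℝ)
      = RingHom.id ℝ := RingHom.ext fun a => by simp
  rw [h]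
  rfl

/-- For `d ≥ 2`, `μ > −1/2`, `β > −1`, the functions
`Q_{m,k}^n(x,t) = C_{n−m}^{(β+1/2, m+μ+(d−1)/2)}(t) t^m P_k^m(x/t)` are polynomials of
degree at most `n` which are mutually orthogonal on the double cone
`{(x,t) : ‖x‖ ≤ |t|, −1 ≤ t ≤ 1}` with respect to `(1−t²)^β (t²−‖x‖²)^{μ−1/2}`,
with strictly positive norms. -/
theorem double_cone_solid_orthogonality
    (d : ℕ) (hd : 2 ≤ d) (μ β : ℝ)
    (hμ : -(1 / 2 : ℝ) < μ) (hβ : -1 < β)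
    (C : ℕ → ℝ → ℝ → Polynomial ℝ)
    (hC : ∀ (j : ℕ) (μ' ν' : ℝ), -(1 / 2 : ℝ) < μ' → -(1 / 2 : ℝ) < ν' →
      IsGenGegenbauer μ' ν' j (C j μ' ν'))
    -- an orthonormal basis `{P_k^m : |k| = m}` of orthogonal polynomials on the ball
    -- with respect to `ϖ_μ(x) = (1−‖x‖²)^{μ−1/2}`
    (Pb : ℕ → (Fin d → ℕ) → MvPolynomial (Fin d) ℝ)
    (hPdeg : ∀ m (k : Fin d → ℕ), (∑ i, k i) = m → (Pb m k).totalDegree = m)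
    (hPlow : ∀ m (k : Fin d → ℕ), (∑ i, k i) = m →
      ∀ Q : MvPolynomial (Fin d) ℝ, Q.totalDegree < m →
        ∫ u in Metric.closedBall (0 : EuclideanSpace ℝ (Fin d)) 1,
          MvPolynomial.eval u (Pb m k) * MvPolynomial.eval u Q *
            (1 - ‖u‖ ^ 2) ^ (μ - 1 / 2) = 0)
    (hPorth : ∀ m (k k' : Fin d → ℕ), (∑ i, k i) = m → (∑ i, k' i) = m →
      ∫ u in Metric.closedBall (0 : EuclideanSpace ℝ (Fin d)) 1,
        MvPolynomial.eval u (Pb m k) * MvPolynomial.eval u (Pb m k') *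
          (1 - ‖u‖ ^ 2) ^ (μ - 1 / 2) = if k = k' then 1 else 0) :
    ∀ n m n' m' : ℕ, ∀ k k' : Fin d → ℕ,
      m ≤ n → (∑ i, k i) = m → m' ≤ n' → (∑ i, k' i) = m' →
      -- `Q_{m,k}^n` is a polynomial of total degree at most `n`
      (∃ Q : MvPolynomial (Fin (d + 1)) ℝ, Q.totalDegree ≤ n ∧
        ∀ (x : EuclideanSpace ℝ (Fin d)) (t : ℝ), t ≠ 0 →
          MvPolynomial.eval (Fin.snoc (x : Fin d → ℝ) t) Q =
            doubleConeFun d C Pb μ β n m k x t) ∧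
      -- orthogonality
      (((n, m, k) ≠ (n', m', k')) →
        ∫ t in Set.Ioo (-1 : ℝ) 1,
          (∫ x in Metric.closedBall (0 : EuclideanSpace ℝ (Fin d)) |t|,
            doubleConeFun d C Pb μ β n m k x t *
            doubleConeFun d C Pb μ β n' m' k' x t *
            (t ^ 2 - ‖x‖ ^ 2) ^ (μ - 1 / 2)) *
          ((1 - t ^ 2) ^ β) = 0) ∧
      -- positivity
      (0 < ∫ t in Set.Ioo (-1 : ℝ) 1,
          (∫ x in Metric.closedBall (0 : EuclideanSpace ℝ (Fin d)) |t|,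
            doubleConeFun d C Pb μ β n m k x t ^ 2 *
            (t ^ 2 - ‖x‖ ^ 2) ^ (μ - 1 / 2)) *
          ((1 - t ^ 2) ^ β)) := by
  intro n m n' m' k k' hmn hkm hm'n' hk'm'
  have hdR : (2:ℝ) ≤ (d:ℝ) := by exact_mod_cast hd
  have hmR : (0:ℝ) ≤ (m:ℝ) := Nat.cast_nonneg m
  have hm'R : (0:ℝ) ≤ (m':ℝ) := Nat.cast_nonneg m'
  have hμ'gt : -(1/2:ℝ) < β + 1/2 := by linarith
  have hνgt : -(1/2:ℝ) < (m:ℝ) + μ + ((d:ℝ) - 1)/2 := by linarith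
  have hν'gt : -(1/2:ℝ) < (m':ℝ) + μ + ((d:ℝ) - 1)/2 := by linarith
  have hν2 : (0:ℝ) ≤ 2 * ((m:ℝ) + μ + ((d:ℝ) - 1)/2) := by linarith
  have hβ12 : ((β + 1/2) - 1/2 : ℝ) = β := by ring
  have hCn := hC (n - m) (β + 1/2) ((m:ℝ) + μ + ((d:ℝ) - 1)/2) hμ'gt hνgt
  have hCn' := hC (n' - m') (β + 1/2) ((m':ℝ) + μ + ((d:ℝ) - 1)/2) hμ'gt hν'gt
  have h0 : ∀ᵐ (t : ℝ) ∂volume, t ≠ 0 := by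
    rw [ae_iff]
    simp only [not_not, Set.setOf_eq_eq_singleton]
    exact Real.volume_singleton
  refine ⟨?_, ?_, ?_⟩
  · -- polynomial of degree ≤ n
    refine ⟨Polynomial.eval₂ MvPolynomial.C (X (Fin.last d))
      (C (n - m) (β + 1/2) ((m:ℝ) + μ + ((d:ℝ) - 1)/2)) * homog d m (Pb m k), ?_, ?_⟩
    · have hdeg : (C (n - m) (β + 1/2) ((m:ℝ) + μ + ((d:ℝ) - 1)/2)).natDegree = n - m :=
        Polynomial.natDegree_eq_of_degree_eq_some hCn.1
      refine le_trans (totalDegree_mul _ _) ?_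
      have h1 := evalTwo_totalDegree d (C (n - m) (β + 1/2) ((m:ℝ) + μ + ((d:ℝ) - 1)/2))
      rw [hdeg] at h1
      have h2 := homog_totalDegree d m (Pb m k) (le_of_eq (hPdeg m k hkm))
      omega
    · intro x t ht
      rw [map_mul, evalTwo_eval, homog_eval d m (Pb m k) (le_of_eq (hPdeg m k hkm)) ht]
      simp only [Fin.snoc_last, doubleConeFun]
      simp only [WithLp.ofLp_smul]
      ring
  · -- orthogonality
    intro hne
    have hFt : ∀ t : ℝ, t ≠ 0 →
        (∫ x in Metric.closedBall (0 : EuclideanSpace ℝ (Fin d)) |t|,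
          doubleConeFun d C Pb μ β n m k x t *
          doubleConeFun d C Pb μ β n' m' k' x t *
          (t ^ 2 - ‖x‖ ^ 2) ^ (μ - 1 / 2))
        = (C (n - m) (β + 1/2) ((m:ℝ) + μ + ((d:ℝ) - 1)/2)).eval t *
          (C (n' - m') (β + 1/2) ((m':ℝ) + μ + ((d:ℝ) - 1)/2)).eval t *
          t ^ (m + m') * |t| ^ d * (t ^ 2) ^ (μ - 1/2) *
          ∫ u in Metric.closedBall (0 : EuclideanSpace ℝ (Fin d)) 1,
            MvPolynomial.eval u (Pb m k) * MvPolynomial.eval u (Pb m' k') *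
            (1 - ‖u‖ ^ 2) ^ (μ - 1/2) := by
      intro t ht
      simp only [doubleConeFun]
      exact inner_transform d ht μ (Pb m k) (Pb m' k') _ _ m m'
    by_cases hmm : m = m'
    · subst hmm
      by_cases hkk : k = k'
      · subst hkk
        have hnn : n ≠ n' := by
          intro h; exact hne (by rw [h])
        have hJ : (∫ u in Metric.closedBall (0 : EuclideanSpace ℝ (Fin d)) 1,
            MvPolynomial.eval u (Pb m k) * MvPolynomial.eval u (Pb m k) *
            (1 - ‖u‖ ^ 2) ^ (μ - 1/2)) = 1 := by
          rw [hPorth m k k hkm hkm, if_pos rfl]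
        have hEq : ∫ t in Set.Ioo (-1:ℝ) 1,
            (∫ x in Metric.closedBall (0 : EuclideanSpace ℝ (Fin d)) |t|,
              doubleConeFun d C Pb μ β n m k x t *
              doubleConeFun d C Pb μ β n' m k x t *
              (t ^ 2 - ‖x‖ ^ 2) ^ (μ - 1 / 2)) * ((1 - t ^ 2) ^ β)
            = ∫ t in Set.Ioo (-1:ℝ) 1,
              (C (n - m) (β + 1/2) ((m:ℝ) + μ + ((d:ℝ) - 1)/2)).eval t *
              (C (n' - m) (β + 1/2) ((m:ℝ) + μ + ((d:ℝ) - 1)/2)).eval t *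
              |t| ^ (2 * ((m:ℝ) + μ + ((d:ℝ) - 1)/2)) *
              (1 - t ^ 2) ^ ((β + 1/2) - 1/2) := by
          refine setIntegral_congr_ae measurableSet_Ioo ?_
          filter_upwards [h0] with t ht _
          rw [hFt t ht, hJ, mul_one, hβ12, ← pow_abs_rpow m d μ ht]
          ring
        rw [hEq]
        exact geg_orth_sym (by linarith) hν2 (by omega) hCn hCn'
      · have hJ : (∫ u in Metric.closedBall (0 : EuclideanSpace ℝ (Fin d)) 1,
            MvPolynomial.eval u (Pb m k) * MvPolynomial.eval u (Pb m k') *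
            (1 - ‖u‖ ^ 2) ^ (μ - 1/2)) = 0 := by
          rw [hPorth m k k' hkm hk'm', if_neg hkk]
        have hEq : ∫ t in Set.Ioo (-1:ℝ) 1,
            (∫ x in Metric.closedBall (0 : EuclideanSpace ℝ (Fin d)) |t|,
              doubleConeFun d C Pb μ β n m k x t *
              doubleConeFun d C Pb μ β n' m k' x t *
              (t ^ 2 - ‖x‖ ^ 2) ^ (μ - 1 / 2)) * ((1 - t ^ 2) ^ β)
            = ∫ t in Set.Ioo (-1:ℝ) 1, (0:ℝ) := by
          refine setIntegral_congr_ae measurableSet_Ioo ?_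
          filter_upwards [h0] with t ht _
          rw [hFt t ht, hJ, mul_zero, zero_mul]
        rw [hEq, integral_zero]
    · have hJ : (∫ u in Metric.closedBall (0 : EuclideanSpace ℝ (Fin d)) 1,
          MvPolynomial.eval u (Pb m k) * MvPolynomial.eval u (Pb m' k') *
          (1 - ‖u‖ ^ 2) ^ (μ - 1/2)) = 0 := by
        rcases lt_or_gt_of_ne hmm with h | h
        · have hlow := hPlow m' k' hk'm' (Pb m k) (by rw [hPdeg m k hkm]; exact h)
          rw [← hlow]
          exact integral_congr_ae (Filter.Eventually.of_forall fun u => by ring)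
        · exact hPlow m k hkm (Pb m' k') (by rw [hPdeg m' k' hk'm']; exact h)
      have hEq : ∫ t in Set.Ioo (-1:ℝ) 1,
          (∫ x in Metric.closedBall (0 : EuclideanSpace ℝ (Fin d)) |t|,
            doubleConeFun d C Pb μ β n m k x t *
            doubleConeFun d C Pb μ β n' m' k' x t *
            (t ^ 2 - ‖x‖ ^ 2) ^ (μ - 1 / 2)) * ((1 - t ^ 2) ^ β)
          = ∫ t in Set.Ioo (-1:ℝ) 1, (0:ℝ) := by
        refine setIntegral_congr_ae measurableSet_Ioo ?_
        filter_upwards [h0] with t ht _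
        rw [hFt t ht, hJ, mul_zero, zero_mul]
      rw [hEq, integral_zero]
  · -- positivity
    set cp := C (n - m) (β + 1/2) ((m:ℝ) + μ + ((d:ℝ) - 1)/2) with hcp
    have hJ : (∫ u in Metric.closedBall (0 : EuclideanSpace ℝ (Fin d)) 1,
        MvPolynomial.eval u (Pb m k) * MvPolynomial.eval u (Pb m k) *
        (1 - ‖u‖ ^ 2) ^ (μ - 1/2)) = 1 := by
      rw [hPorth m k k hkm hkm, if_pos rfl]
    have hFt : ∀ t : ℝ, t ≠ 0 →
        (∫ x in Metric.closedBall (0 : EuclideanSpace ℝ (Fin d)) |t|,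
          doubleConeFun d C Pb μ β n m k x t ^ 2 *
          (t ^ 2 - ‖x‖ ^ 2) ^ (μ - 1 / 2))
        = cp.eval t * cp.eval t * t ^ (m + m) * |t| ^ d * (t ^ 2) ^ (μ - 1/2) := by
      intro t ht
      have : ∀ x : EuclideanSpace ℝ (Fin d),
          doubleConeFun d C Pb μ β n m k x t ^ 2 *
            (t ^ 2 - ‖x‖ ^ 2) ^ (μ - 1 / 2)
          = (cp.eval t * t ^ m * MvPolynomial.eval (t⁻¹ • x) (Pb m k)) *
            (cp.eval t * t ^ m * MvPolynomial.eval (t⁻¹ • x) (Pb m k)) *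
            (t ^ 2 - ‖x‖ ^ 2) ^ (μ - 1/2) := by
        intro x
        simp only [doubleConeFun, hcp]
        ring
      simp only [this]
      rw [inner_transform d ht μ (Pb m k) (Pb m k) _ _ m m, hJ, mul_one]
    have hEq : ∫ t in Set.Ioo (-1:ℝ) 1,
        (∫ x in Metric.closedBall (0 : EuclideanSpace ℝ (Fin d)) |t|,
          doubleConeFun d C Pb μ β n m k x t ^ 2 *
          (t ^ 2 - ‖x‖ ^ 2) ^ (μ - 1 / 2)) * ((1 - t ^ 2) ^ β)
        = ∫ t in Set.Ioo (-1:ℝ) 1,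
          (cp * cp).eval t * t ^ 0 * |t| ^ (2 * ((m:ℝ) + μ + ((d:ℝ) - 1)/2)) *
          (1 - t ^ 2) ^ β := by
      refine setIntegral_congr_ae measurableSet_Ioo ?_
      filter_upwards [h0] with t ht _
      rw [hFt t ht, ← pow_abs_rpow m d μ ht, Polynomial.eval_mul]
      ring
    rw [hEq]
    have hcpne : cp ≠ 0 := by
      intro h
      have := hCn.1
      rw [h, Polynomial.degree_zero] at this
      exact absurd this (by simp)
    have hint : IntegrableOn
        (fun t : ℝ => (cp * cp).eval t * t ^ 0 * |t| ^ (2 * ((m:ℝ) + μ + ((d:ℝ) - 1)/2)) *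
          (1 - t ^ 2) ^ β) (Set.Ioo (-1) 1) :=
      poly_weight_integrable (cp * cp) 0 hν2 hβ
    have hnn : 0 ≤ᵐ[volume.restrict (Set.Ioo (-1:ℝ) 1)]
        fun t : ℝ => (cp * cp).eval t * t ^ 0 * |t| ^ (2 * ((m:ℝ) + μ + ((d:ℝ) - 1)/2)) *
          (1 - t ^ 2) ^ β := by
      filter_upwards [ae_restrict_mem measurableSet_Ioo] with t ht
      have h1 : (0:ℝ) ≤ 1 - t ^ 2 := by nlinarith [ht.1, ht.2]
      have h2 : (0:ℝ) ≤ (cp * cp).eval t := by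
        rw [Polynomial.eval_mul]; exact mul_self_nonneg _
      have h3 : (0:ℝ) ≤ |t| ^ (2 * ((m:ℝ) + μ + ((d:ℝ) - 1)/2)) :=
        Real.rpow_nonneg (abs_nonneg t) _
      have h4 : (0:ℝ) ≤ (1 - t ^ 2) ^ β := Real.rpow_nonneg h1 β
      simp only [pow_zero, mul_one]
      positivity
    rw [setIntegral_pos_iff_support_of_nonneg_ae hnn hint]
    set S : Set ℝ := {t : ℝ | cp.IsRoot t} ∪ {0} with hS
    have hSnull : volume S = 0 :=
      measure_union_null ((Polynomial.finite_setOf_isRoot hcpne).measure_zero volume)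
        (measure_singleton 0)
    have hsub : Set.Ioo (-1:ℝ) 1 \ S ⊆
        (Function.support fun t : ℝ => (cp * cp).eval t * t ^ 0 *
          |t| ^ (2 * ((m:ℝ) + μ + ((d:ℝ) - 1)/2)) * (1 - t ^ 2) ^ β) ∩
        Set.Ioo (-1) 1 := by
      rintro t ⟨htI, htS⟩
      have ht0 : t ≠ 0 := fun h => htS (Or.inr (by simp [h]))
      have htr : ¬ cp.IsRoot t := fun h => htS (Or.inl h)
      refine ⟨?_, htI⟩
      have h1 : (0:ℝ) < 1 - t ^ 2 := by nlinarith [htI.1, htI.2]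
      apply mul_ne_zero
      apply mul_ne_zero
      apply mul_ne_zero
      · rw [Polynomial.eval_mul]
        exact mul_ne_zero htr htr
      · simp
      · exact ne_of_gt (Real.rpow_pos_of_pos (abs_pos.mpr ht0) _)
      · exact ne_of_gt (Real.rpow_pos_of_pos h1 β)
    calc (0:ENNReal) < volume (Set.Ioo (-1:ℝ) 1 \ S) := by
          rw [measure_diff_null hSnull, Real.volume_Ioo]
          norm_num
      _ ≤ _ := measure_mono hsub
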